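/- arXiv:2303.11185 — 3 statements merged into one kernel-verified Lean document; each statement's English description precedes it below -/
import Mathlib

section
/- For 0 ≤ k, m < 2^n, the entry of G_N = G_2^{⊗n} in row k and column m equals the evaluation of the monomial ∏_{j : b_{k,j} = 0} z_j at the point z = b_{N-m-1}, where b_i denotes the binary representation of i and N = 2^n. -/
/-- The polar kernel `G₂ = [[1,0],[1,1]]` over `F₂`. -/
def G2 : Matrix (Fin 2) (Fin 2) (ZMod 2) := !![1, 0; 1, 1]

/-- The `n`-th Kronecker power `G_N = G₂^{⊗n}`, with rows and columns indexed by
length-`n` bit vectors. -/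
def GN (n : ℕ) : Matrix (Fin n → Fin 2) (Fin n → Fin 2) (ZMod 2) :=
  Matrix.of fun k m => ∏ j, G2 (k j) (m j)

/-- The binary representation `b_k` of `k` as a length-`n` vector of `Fin 2`. -/
def bitVec (n k : ℕ) : Fin n → Fin 2 := fun j => if k.testBit j then 1 else 0

/-! `G₂ a b = 0` only for `a = 0, b = 1`, so the entry `(k, m)` of the Kronecker power is
`∏_{j : b_{k,j} = 0} (1 - b_{m,j})`, and for `m < 2^n` the low `n` bits of `2^n - m - 1` are
exactly the complements of those of `m`. -/

theorem Nat.testBit_two_pow_sub_sub_one {n m j : ℕ} (hm : m < 2 ^ n) (hj : j < n) :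
    (2 ^ n - m - 1).testBit j = !m.testBit j := by
  rw [Nat.sub_sub, Nat.testBit_two_pow_sub_succ hm]
  simp [hj]

theorem G2_ite_apply (x y : Bool) :
    G2 (if x then 1 else 0) (if y then 1 else 0)
      = if ¬x then (if !y then (1 : ZMod 2) else 0) else 1 := by
  cases x <;> cases y <;> rfl

theorem GN_bitVec_apply (n k m : ℕ) :
    GN n (bitVec n k) (bitVec n m)
      = ∏ j ∈ Finset.univ.filter (fun j : Fin n => ¬ k.testBit j),
          (if !m.testBit j then (1 : ZMod 2) else 0) := by
  rw [GN, Matrix.of_apply, Finset.prod_filter]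
  exact Finset.prod_congr rfl fun j _ => G2_ite_apply _ _

theorem entry_eq_monomial_eval_general (n k m : ℕ) (hm : m < 2 ^ n) :
    GN n (bitVec n k) (bitVec n m)
      = ∏ j ∈ Finset.univ.filter (fun j : Fin n => ¬ k.testBit j),
          (if (2 ^ n - m - 1).testBit j then (1 : ZMod 2) else 0) := by
  rw [GN_bitVec_apply]
  refine Finset.prod_congr rfl fun j _ => ?_
  rw [Nat.testBit_two_pow_sub_sub_one hm j.isLt]

/-- the entry of `G_N = G₂^{⊗n}` in row `k` and column `m` equals the
evaluation of the monomial `∏_{j : b_{k,j} = 0} z_j` at `z = b_{N-m-1}`, `N = 2^n`. -/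
theorem entry_eq_monomial_eval (n k m : ℕ) (hk : k < 2 ^ n) (hm : m < 2 ^ n) :
    GN n (bitVec n k) (bitVec n m)
      = ∏ j ∈ Finset.univ.filter (fun j : Fin n => ¬ k.testBit j),
          (if (2 ^ n - m - 1).testBit j then (1 : ZMod 2) else 0) :=
  entry_eq_monomial_eval_general n k m hm
end

section
/- The maximum number D of dynamic frozen bits for the Reed–Muller code R(r,n) under the complement-pairing constraint equals the number of indices i with w(b_i) < n−r, b_{i,n-1} = 1, and n − w(b_i) ≥ n−r, which equals the sum over 1 ≤ t ≤ min(n−r−1, r) of binomial(n−1, t−1). -/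
/-! Reading `i < 2 ^ n` as the set of positions of its `1`-bits (`Finset.equivBitIndices`)
identifies `dynSet n r` with the subsets `S ⊆ {0, …, n - 1}` that contain `n - 1` and satisfy
`1 ≤ |S| ≤ min (n - r - 1) r`. Those of size `t` are determined by their remaining `t - 1`
elements, chosen among `n - 1`. -/

/-- The binary representation `b_k` of `k` as a vector in `F₂ⁿ`. -/
def bitVecZ (n k : ℕ) : Fin n → ZMod 2 := fun j => if k.testBit j then 1 else 0

/-- The Hamming weight of a vector in `F₂ⁿ`. -/
def wt {n : ℕ} (v : Fin n → ZMod 2) : ℕ := (Finset.univ.filter fun j => v j = 1).card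

/-- The dynamic frozen indices of `R(r,n)` under the complement-pairing constraint:
frozen (`w(b_i) < n−r`), last bit `1`, and complement weight `n − w(b_i) ≥ n−r`. -/
def dynSet (n r : ℕ) : Finset ℕ :=
  (Finset.range (2 ^ n)).filter fun i =>
    wt (bitVecZ n i) < n - r ∧ i.testBit (n - 1) ∧ n - r ≤ n - wt (bitVecZ n i)

open Finset

lemma Nat.geomSum_lt_pow_iff {m n : ℕ} {s : Finset ℕ} (hm : 2 ≤ m) :
    ∑ k ∈ s, m ^ k < m ^ n ↔ ∀ k ∈ s, k < n := by
  refine ⟨fun h k hk => ?_, Nat.geomSum_lt hm⟩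
  exact (Nat.pow_lt_pow_iff_right (by omega)).1
    ((single_le_sum (fun _ _ => Nat.zero_le _) hk).trans_lt h)

lemma Finset.map_equivBitIndices_range_two_pow (n : ℕ) :
    (range (2 ^ n)).map equivBitIndices.toEmbedding = (range n).powerset := by
  ext S
  simp [mem_map_equiv, Nat.geomSum_lt_pow_iff le_rfl, subset_iff]

lemma Finset.filter_testBit_range_eq_equivBitIndices {n i : ℕ} (hi : i < 2 ^ n) :
    {j ∈ range n | i.testBit j} = equivBitIndices i := by
  ext j
  simp only [mem_filter, mem_range, equivBitIndices_apply, List.mem_toFinset,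
    Nat.mem_bitIndices, and_iff_right_iff_imp]
  intro hj
  by_contra! hnj
  simp [Nat.testBit_eq_false_of_lt (hi.trans_le (Nat.pow_le_pow_right two_pos hnj))] at hj

lemma wt_bitVecZ_of_lt {n i : ℕ} (hi : i < 2 ^ n) :
    wt (bitVecZ n i) = #(equivBitIndices i) := by
  rw [← filter_testBit_range_eq_equivBitIndices hi, wt, ← Nat.Iio_eq_range,
    ← Fin.map_valEmbedding_univ, filter_map, card_map]
  congr 1
  ext j
  simp [bitVecZ]

lemma card_dynSet (n r : ℕ) :
    #(dynSet n r) = #{S ∈ (range n).powerset | n - 1 ∈ S ∧ #S ≤ min (n - r - 1) r} := by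
  rw [← map_equivBitIndices_range_two_pow, filter_map, card_map, dynSet]
  congr 1
  refine filter_congr fun i hi => ?_
  have hsub : equivBitIndices i ⊆ range n := by
    rw [← mem_powerset, ← map_equivBitIndices_range_two_pow]
    exact mem_map_of_mem _ hi
  have hcard := card_range n ▸ card_le_card hsub
  rw [wt_bitVecZ_of_lt (mem_range.1 hi)]
  simp only [Function.comp_apply, Equiv.coe_toEmbedding, equivBitIndices_apply,
    List.mem_toFinset, Nat.mem_bitIndices] at hcard ⊢
  constructor
  · rintro ⟨hfrozen, hlast, hinfo⟩
    exact ⟨hlast, by omega⟩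
  · rintro ⟨hlast, hle⟩
    have hpos : 0 < #i.bitIndices.toFinset := card_pos.2 ⟨n - 1, by simpa using hlast⟩
    exact ⟨by omega, hlast, by omega⟩

lemma card_filter_powerset_mem_card_le {α : Type*} [DecidableEq α] {s : Finset α} {a : α}
    (ha : a ∈ s) (m : ℕ) :
    #{S ∈ s.powerset | a ∈ S ∧ #S ≤ m} = ∑ t ∈ Icc 1 m, (#s - 1).choose (t - 1) := by
  rw [card_eq_sum_card_fiberwise (f := card) (t := Icc 1 m)]
  · refine sum_congr rfl fun t ht => ?_
    rw [← card_singleton a,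
      ← card_filter_powersetCard_subset {a} s t (by simpa) (by simpa using (mem_Icc.1 ht).1)]
    congr 1
    ext S
    simp only [mem_filter, mem_powerset, mem_powersetCard, singleton_subset_iff]
    constructor
    · rintro ⟨⟨hS, haS, -⟩, rfl⟩; exact ⟨⟨hS, rfl⟩, haS⟩
    · rintro ⟨⟨hS, rfl⟩, haS⟩; exact ⟨⟨hS, haS, (mem_Icc.1 ht).2⟩, rfl⟩
  · intro S hS
    simp only [coe_filter, mem_powerset, Set.mem_ofPred_eq] at hS
    exact mem_Icc.2 ⟨card_pos.2 ⟨a, hS.2.1⟩, hS.2.2⟩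

theorem count_dynamic_frozen_bits_general (n r : ℕ) (hn : 1 ≤ n) :
    (dynSet n r).card
      = ∑ t ∈ Finset.Icc 1 (min (n - r - 1) r), Nat.choose (n - 1) (t - 1) := by
  rw [card_dynSet, card_filter_powerset_mem_card_le (mem_range.2 (by omega)), card_range]

/-- the maximum number `D` of dynamic frozen bits of `R(r,n)` under the
complement-pairing constraint equals `∑_{t=1}^{min(n−r−1, r)} C(n−1, t−1)`. -/
theorem count_dynamic_frozen_bits (n r : ℕ) (hn : 1 ≤ n) (hr : r ≤ n - 1) :
    (dynSet n r).card
      = ∑ t ∈ Finset.Icc 1 (min (n - r - 1) r), Nat.choose (n - 1) (t - 1) :=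
  count_dynamic_frozen_bits_general n r hn
end

section
/- Suppose V and V_T = V·(G_N·T^{-1}·G_N)ᵀ have the same row space over F_2, where T is a permutation matrix. Then the polar subcode C = { u·G_N : V·uᵀ = 0 } is invariant under the permutation given by T, i.e., x·T ∈ C for all x ∈ C. -/
def IsPermMatrix {ι : Type*} [DecidableEq ι] (A : Matrix ι ι (ZMod 2)) : Prop :=
  ∃ σ : Equiv.Perm ι, ∀ i j, A i j = if j = σ i then 1 else 0

def polarSubcode (n K : ℕ) (V : Matrix (Fin (2 ^ n - K)) (Fin n → Fin 2) (ZMod 2)) :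
    Set ((Fin n → Fin 2) → ZMod 2) :=
  {x | ∃ u, V.mulVec u = 0 ∧ x = Matrix.vecMul u (GN n)}

open Matrix

theorem Matrix.of_prod_mul_of_prod {R ι κ : Type*} [CommSemiring R] [Fintype ι] [DecidableEq ι]
    [Fintype κ] (A B : Matrix κ κ R) :
    (of fun k m : ι → κ => ∏ j, A (k j) (m j)) * (of fun k m : ι → κ => ∏ j, B (k j) (m j)) =
      of fun k m => ∏ j, (A * B) (k j) (m j) := by
  ext k m
  simp only [mul_apply, of_apply, ← Finset.prod_mul_distrib, Fintype.prod_sum]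

theorem Matrix.of_prod_one {R ι κ : Type*} [CommSemiring R] [Fintype ι] [DecidableEq κ] :
    (of fun k m : ι → κ => ∏ j, (1 : Matrix κ κ R) (k j) (m j)) = 1 := by
  ext k m
  simp [one_apply, Finset.prod_boole, funext_iff]

theorem G2_mul_G2 : G2 * G2 = 1 := by decide

theorem GN_mul_GN (n : ℕ) : GN n * GN n = 1 := by
  rw [GN, of_prod_mul_of_prod, G2_mul_G2, of_prod_one]

theorem Matrix.mulVec_eq_zero_of_span_range_le {R m m' k : Type*} [CommSemiring R] [Fintype k]
    {A : Matrix m k R} {B : Matrix m' k R}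
    (h : Submodule.span R (Set.range A) ≤ Submodule.span R (Set.range B)) {v : k → R}
    (hv : B *ᵥ v = 0) : A *ᵥ v = 0 := by
  have hB : Submodule.span R (Set.range B) ≤ LinearMap.ker ((dotProductBilin R R).flip v) := by
    rw [Submodule.span_le]
    rintro _ ⟨i, rfl⟩
    exact congrFun hv i
  funext i
  exact hB (h (Submodule.subset_span ⟨i, rfl⟩))

theorem stable_constraint_gives_automorphism_general (n K : ℕ)
    (V : Matrix (Fin (2 ^ n - K)) (Fin n → Fin 2) (ZMod 2))
    (T Tinv : Matrix (Fin n → Fin 2) (Fin n → Fin 2) (ZMod 2))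
    (hTl : T * Tinv = 1)
    (hspan : Submodule.span (ZMod 2) (Set.range V)
      = Submodule.span (ZMod 2) (Set.range (V * (GN n * Tinv * GN n).transpose))) :
    ∀ x ∈ polarSubcode n K V, Matrix.vecMul x T ∈ polarSubcode n K V := by
  rintro _ ⟨u, hu, rfl⟩
  set M := GN n * T * GN n
  have hM : M * (GN n * Tinv * GN n) = 1 := by
    simp only [M, Matrix.mul_assoc, ← Matrix.mul_assoc (GN n) (GN n), GN_mul_GN, Matrix.one_mul,
      ← Matrix.mul_assoc T Tinv, hTl]
  refine ⟨u ᵥ* M, mulVec_eq_zero_of_span_range_le hspan.le ?_, ?_⟩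
  · rw [← mulVec_mulVec, mulVec_transpose, vecMul_vecMul, hM, vecMul_one, hu]
  · simp only [M, vecMul_vecMul, Matrix.mul_assoc, GN_mul_GN, Matrix.mul_one]

/-- if `V` and `V_T = V·(G_N·T⁻¹·G_N)ᵀ` have the same row space, then the
polar subcode defined by `V` is invariant under the permutation given by `T`. -/
theorem stable_constraint_gives_automorphism (n K : ℕ)
    (V : Matrix (Fin (2 ^ n - K)) (Fin n → Fin 2) (ZMod 2))
    (T Tinv : Matrix (Fin n → Fin 2) (Fin n → Fin 2) (ZMod 2))
    (hT : IsPermMatrix T) (hTl : T * Tinv = 1) (hTr : Tinv * T = 1)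
    (hspan : Submodule.span (ZMod 2) (Set.range V)
      = Submodule.span (ZMod 2) (Set.range (V * (GN n * Tinv * GN n).transpose))) :
    ∀ x ∈ polarSubcode n K V, Matrix.vecMul x T ∈ polarSubcode n K V :=
  stable_constraint_gives_automorphism_general n K V T Tinv hTl hspan
end
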